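/- For any ideal J of a commutative ring R, the annihilator Ann(J) = {r ∈ R : rJ = 0} is a countable strongly annihilated ideal of R, provided Ann(J) ≠ R. -/

import Mathlib

/-- An ideal `I` is countable strongly annihilated if for each countable subset `S ⊆ I`
and each `b ∉ I` there exists `c` with `c * a = 0` for all `a ∈ S` but `c * b ≠ 0`. -/
def CountableStronglyAnnihilated {R : Type*} [CommRing R] (I : Ideal R) : Prop :=
  ∀ S : Set R, S.Countable → S ⊆ I → ∀ b ∉ I, ∃ c : R, (∀ a ∈ S, c * a = 0) ∧ c * b ≠ 0

theorem Ideal.exists_mul_annihilator_eq_zero_and_mul_ne_zero {R : Type*} [CommRing R]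
    (J : Ideal R) {b : R} (hb : b ∉ Submodule.annihilator J) :
    ∃ c : R, (∀ a ∈ Submodule.annihilator J, c * a = 0) ∧ c * b ≠ 0 := by
  obtain ⟨j, hj, hjb⟩ : ∃ j ∈ J, b * j ≠ 0 := by
    simpa [Submodule.mem_annihilator] using hb
  exact ⟨j, fun a ha => by rw [mul_comm]; exact Submodule.mem_annihilator.mp ha j hj,
    by rwa [mul_comm]⟩

theorem stmt4 {R : Type*} [CommRing R] (J : Ideal R) :
    CountableStronglyAnnihilated (Submodule.annihilator J) := by
  intro S _ hS b hb
  obtain ⟨c, hc, hcb⟩ := J.exists_mul_annihilator_eq_zero_and_mul_ne_zero hb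
  exact ⟨c, fun a ha => hc a (hS ha), hcb⟩
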